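/- With Γ = {A₁,…,Aₙ}, Γ ⊨ A in miP-tV if and only if the inference rule whose instances are all structures obtained by appending conclusion A (with no dischargement) below any argument structures for A₁,…,Aₙ is logically valid relative to some set of reductions J. -/

import Mathlib

/-- Propositional atoms: `⊥` and countably many atoms `p n`. -/
inductive PAtom : Type
  | bot
  | p (n : ℕ)
deriving DecidableEq

/-- Formulas of the propositional language. -/
inductive Formula : Type
  | atom (a : PAtom)
  | and (A B : Formula)
  | or (A B : Formula)
  | imp (A B : Formula)
deriving DecidableEq

/-- Atomic rules (level ≤ 1): a list of atomic premises and an atomic conclusion.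
An axiom (level-0 rule) is `⟨[], a⟩`. -/
structure ARule where
  prems : List PAtom
  concl : PAtom
deriving DecidableEq

/-- The atomic explosion rules: from `⊥` infer any atom. -/
def AE : Set ARule := { r | ∃ a, r = ⟨[PAtom.bot], a⟩ }

/-- An atomic base is a set of atomic rules containing atomic explosion. -/
def IsBase (B : Set ARule) : Prop := AE ⊆ B

/-- Argument structures: natural-deduction-style trees with arbitrary inference
steps. `hyp A` is an assumption; `node c prems` is an inference to conclusion `c`
from the listed premise subtrees, where each premise comes with a list of
assumption-formulas it discharges in that subtree. An axiom is `node c []`. -/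
inductive Arg : Type
  | hyp (A : Formula)
  | node (concl : Formula) (prems : List (List Formula × Arg))

/-- Conclusion of an argument structure. -/
def Arg.concl : Arg → Formula
  | .hyp A => A
  | .node c _ => c

mutual
/-- The (open, i.e. undischarged) assumption-formulas of an argument structure. -/
def Arg.assumptions : Arg → Finset Formula
  | .hyp A => {A}
  | .node _ prems => assumptionsList prems

def assumptionsList : List (List Formula × Arg) → Finset Formula
  | [] => ∅
  | pr :: rest => (Arg.assumptions pr.2 \ pr.1.toFinset) ∪ assumptionsList rest
end

mutual
/-- Substitution of argument structures for the open assumptions of an argument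
structure; `bound` records the assumption-formulas discharged above. -/
def Arg.subst (σ : Formula → Arg) (bound : Finset Formula) : Arg → Arg
  | .hyp A => if A ∈ bound then .hyp A else σ A
  | .node c prems => .node c (substList σ bound prems)

def substList (σ : Formula → Arg) (bound : Finset Formula) :
    List (List Formula × Arg) → List (List Formula × Arg)
  | [] => []
  | pr :: rest => (pr.1, Arg.subst σ (bound ∪ pr.1.toFinset) pr.2) :: substList σ bound rest
end

/-- `AtomDeriv B D` : the argument structure `D` is an atomic derivation of the
base `B` (every node is an application of a rule of `B`). -/
inductive AtomDeriv (B : Set ARule) : Arg → Prop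
  | app (r : ARule) (hr : r ∈ B) (subs : List Arg)
      (hc : subs.map Arg.concl = r.prems.map Formula.atom)
      (hs : ∀ D ∈ subs, AtomDeriv B D) :
      AtomDeriv B (.node (.atom r.concl) (subs.map (fun D => ([], D))))

/-- A reduction is a partial function on argument structures. -/
abbrev Red := Arg → Option Arg

/-- One-step reduction relative to a set of reductions `J`: apply some `φ ∈ J` to
some substructure. -/
inductive Step (J : Set Red) : Arg → Arg → Prop
  | red {φ : Red} {D D' : Arg} : φ ∈ J → φ D = some D' → Step J D D'
  | congr {c : Formula} {pre post : List (List Formula × Arg)} {ds : List Formula}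
      {D D' : Arg} : Step J D D' →
      Step J (.node c (pre ++ (ds, D) :: post)) (.node c (pre ++ (ds, D') :: post))

/-- `D` reduces to `D'` relative to `J` (reflexive-transitive closure). -/
def Reduces (J : Set Red) : Arg → Arg → Prop := Relation.ReflTransGen (Step J)

/-- Validity of closed arguments `⟨D, J⟩` on a base `B`, by recursion on the
conclusion: a closed argument with atomic conclusion must reduce to an atomic
derivation of the base; one with compound conclusion must reduce to a canonical
(introduction-ended) closed structure whose immediate substructures are valid
(for `→`, valid as an open argument: under every extension of the reduction set
and of the base, substitution of valid closed arguments for the discharged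
assumption yields a valid closed argument). -/
def CValid : Formula → Set ARule → Set Red → Arg → Prop
  | .atom a, B, J, D => ∃ D', Reduces J D D' ∧ AtomDeriv B D' ∧ D'.concl = .atom a
  | .and A C, B, J, D => ∃ D1 D2 : Arg,
      Reduces J D (.node (A.and C) [([], D1), ([], D2)]) ∧
      D1.assumptions = ∅ ∧ D2.assumptions = ∅ ∧ D1.concl = A ∧ D2.concl = C ∧
      CValid A B J D1 ∧ CValid C B J D2
  | .or A C, B, J, D =>
      (∃ D1 : Arg, Reduces J D (.node (A.or C) [([], D1)]) ∧
        D1.assumptions = ∅ ∧ D1.concl = A ∧ CValid A B J D1) ∨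
      (∃ D1 : Arg, Reduces J D (.node (A.or C) [([], D1)]) ∧
        D1.assumptions = ∅ ∧ D1.concl = C ∧ CValid C B J D1)
  | .imp A C, B, J, D => ∃ D1 : Arg,
      Reduces J D (.node (A.imp C) [([A], D1)]) ∧
      D1.assumptions ⊆ {A} ∧ D1.concl = C ∧
      ∀ H : Set Red, J ⊆ H → ∀ X : Set ARule, B ⊆ X → ∀ E : Arg,
        E.assumptions = ∅ → E.concl = A → CValid A X H E →
        CValid C X H (Arg.subst (fun _ => E) ∅ D1)

/-- Validity of an argument `⟨D, J⟩` on a base `B` (Prawitz, monotonic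
introduction-based form): closed arguments as in `CValid`; an open argument is
valid iff for every extension `H ⊇ J` of the reduction set, every extension
`X ⊇ B` of the base, and every assignment of closed arguments valid on `X`
(w.r.t. `H`) to its open assumptions, the resulting closed instance is valid
on `X` w.r.t. `H`. -/
def Valid (B : Set ARule) (D : Arg) (J : Set Red) : Prop :=
  if D.assumptions = ∅ then CValid D.concl B J D
  else ∀ (σ : Formula → Arg) (H : Set Red) (X : Set ARule), J ⊆ H → B ⊆ X →
    (∀ A ∈ D.assumptions, (σ A).assumptions = ∅ ∧ (σ A).concl = A ∧ CValid A X H (σ A)) →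
    CValid D.concl X H (Arg.subst σ ∅ D)

/-- Logical validity: validity on every atomic base. -/
def LValid (D : Arg) (J : Set Red) : Prop :=
  ∀ B : Set ARule, IsBase B → Valid B D J

/-- miP-tV consequence over a base: `Γ ⊨_B A` iff there is an argument `⟨D, J⟩`
valid on `B` with `D` an argument structure from `Γ` to `A`. -/
def EntailsOn (B : Set ARule) (Γ : Finset Formula) (A : Formula) : Prop :=
  ∃ (D : Arg) (J : Set Red), D.assumptions = Γ ∧ D.concl = A ∧ Valid B D J

/-- miP-tV logical consequence: `Γ ⊨ A` iff there is a logically valid argument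
`⟨D, J⟩` with `D` from `Γ` to `A`. -/
def Entails (Γ : Finset Formula) (A : Formula) : Prop :=
  ∃ (D : Arg) (J : Set Red), D.assumptions = Γ ∧ D.concl = A ∧ LValid D J

/-- Validity (relative to `J`, on `B`) of the inference rule whose instances append
conclusion `A` (discharging nothing) below arbitrary argument structures for the
formulas in `As`: for all `H ⊇ J`, all extensions `X ⊇ B` and every instance, if
the immediate subarguments paired with `H` are valid on `X`, so is the composed
structure paired with `H`. -/
def RuleValidOn (B : Set ARule) (J : Set Red) (As : List Formula) (A : Formula) : Prop :=
  ∀ H : Set Red, J ⊆ H → ∀ X : Set ARule, B ⊆ X → ∀ Ds : List Arg,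
    List.Forall₂ (fun (D : Arg) (G : Formula) => D.concl = G ∧ Valid X D H) Ds As →
    Valid X (.node A (Ds.map (fun D => ([], D)))) H

/-!
If `⟨D, J⟩` is logically valid, adjoin to `J` the reduction that rewrites any one-step inference
with premises `D₁, …, Dₖ` into `D`, each open assumption `G` of `D` replaced by a `Dᵢ` concluding
`G`. An instance of the rule with closed valid premises then reduces in one step to a closed
instance of `D` by valid arguments, which is valid. Validity is closed under expansion, and an open
argument is valid iff all its closed instances are, so the rule is valid. Conversely, the one-step
structure from the assumptions `A₁, …, Aₙ` to `A` is an instance of the rule with valid premises.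
-/

open List Relation

theorem Step.mono {J H : Set Red} (hJH : J ⊆ H) {D D' : Arg} (h : Step J D D') : Step H D D' := by
  induction h with
  | red hφ he => exact .red (hJH hφ) he
  | congr _ ih => exact .congr ih

theorem Reduces.mono {J H : Set Red} (hJH : J ⊆ H) {D D' : Arg} (h : Reduces J D D') :
    Reduces H D D' :=
  ReflTransGen.mono (fun _ _ => Step.mono hJH) _ _ h

theorem AtomDeriv.mono {B X : Set ARule} (hBX : B ⊆ X) {D : Arg} (h : AtomDeriv B D) :
    AtomDeriv X D := by
  induction h with
  | app r hr subs hc _ ih => exact .app r (hBX hr) subs hc ih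

theorem CValid.mono {B X : Set ARule} {J H : Set Red} (hBX : B ⊆ X) (hJH : J ⊆ H)
    {A : Formula} {D : Arg} (h : CValid A B J D) : CValid A X H D := by
  induction A generalizing D with
  | atom a =>
    obtain ⟨D', hr, hd, hc⟩ := h
    exact ⟨D', hr.mono hJH, hd.mono hBX, hc⟩
  | and A C ihA ihC =>
    obtain ⟨D1, D2, hr, h1, h2, h3, h4, hv1, hv2⟩ := h
    exact ⟨D1, D2, hr.mono hJH, h1, h2, h3, h4, ihA hv1, ihC hv2⟩
  | or A C ihA ihC =>
    rcases h with ⟨D1, hr, h1, h2, hv⟩ | ⟨D1, hr, h1, h2, hv⟩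
    · exact .inl ⟨D1, hr.mono hJH, h1, h2, ihA hv⟩
    · exact .inr ⟨D1, hr.mono hJH, h1, h2, ihC hv⟩
  | imp A C =>
    obtain ⟨D1, hr, h1, h2, hv⟩ := h
    exact ⟨D1, hr.mono hJH, h1, h2,
      fun H' hH' X' hX' => hv H' (hJH.trans hH') X' (hBX.trans hX')⟩

theorem CValid.of_reduces {B : Set ARule} {J : Set Red} {A : Formula} {D D' : Arg}
    (h : Reduces J D D') (hv : CValid A B J D') : CValid A B J D := by
  cases A with
  | atom a =>
    obtain ⟨E, hr, hd, hc⟩ := hv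
    exact ⟨E, h.trans hr, hd, hc⟩
  | and A C =>
    obtain ⟨D1, D2, hr, hrest⟩ := hv
    exact ⟨D1, D2, h.trans hr, hrest⟩
  | or A C =>
    rcases hv with ⟨D1, hr, hrest⟩ | ⟨D1, hr, hrest⟩
    · exact .inl ⟨D1, h.trans hr, hrest⟩
    · exact .inr ⟨D1, h.trans hr, hrest⟩
  | imp A C =>
    obtain ⟨D1, hr, hrest⟩ := hv
    exact ⟨D1, h.trans hr, hrest⟩

mutual
theorem Arg.subst_eq_self (σ : Formula → Arg) :
    ∀ (bound : Finset Formula) (D : Arg), D.assumptions ⊆ bound → D.subst σ bound = D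
  | bound, .hyp A, h => by
    have : A ∈ bound := by simpa [Arg.assumptions] using h
    simp [Arg.subst, this]
  | bound, .node c prems, h => by
    rw [Arg.subst, substList_eq_self σ bound prems (by simpa [Arg.assumptions] using h)]

theorem substList_eq_self (σ : Formula → Arg) :
    ∀ (bound : Finset Formula) (l : List (List Formula × Arg)),
      assumptionsList l ⊆ bound → substList σ bound l = l
  | _, [], _ => rfl
  | bound, pr :: rest, h => by
    rw [assumptionsList, Finset.union_subset_iff] at h
    rw [substList, substList_eq_self σ bound rest h.2,
      Arg.subst_eq_self σ (bound ∪ _) pr.2 (sdiff_le_iff'.mp h.1)]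
end

mutual
theorem Arg.assumptions_subst_subset (σ : Formula → Arg) :
    ∀ (bound : Finset Formula) (D : Arg),
      (∀ G ∈ D.assumptions, G ∉ bound → (σ G).assumptions = ∅) →
      (D.subst σ bound).assumptions ⊆ bound
  | bound, .hyp A, h => by
    by_cases hA : A ∈ bound
    · simp [Arg.subst, hA, Arg.assumptions]
    · simp [Arg.subst, hA, h A (by simp [Arg.assumptions]) hA]
  | bound, .node c prems, h =>
    assumptionsList_substList_subset σ bound prems (by simpa [Arg.assumptions] using h)

theorem assumptionsList_substList_subset (σ : Formula → Arg) :
    ∀ (bound : Finset Formula) (l : List (List Formula × Arg)),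
      (∀ G ∈ assumptionsList l, G ∉ bound → (σ G).assumptions = ∅) →
      assumptionsList (substList σ bound l) ⊆ bound
  | _, [], _ => Finset.empty_subset _
  | bound, pr :: rest, h => by
    simp only [assumptionsList, Finset.mem_union, Finset.mem_sdiff] at h
    rw [substList, assumptionsList, Finset.union_subset_iff]
    refine ⟨sdiff_le_iff'.mpr (Arg.assumptions_subst_subset σ _ pr.2 fun G hG hGb => ?_),
      assumptionsList_substList_subset σ bound rest fun G hG => h G (.inr hG)⟩
    rw [Finset.mem_union, not_or] at hGb
    exact h G (.inl ⟨hG, hGb.2⟩) hGb.1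
end

theorem Arg.concl_subst {σ : Formula → Arg} {bound : Finset Formula} {D : Arg}
    (h : ∀ G ∈ D.assumptions, (σ G).concl = G) : (D.subst σ bound).concl = D.concl := by
  cases D with
  | hyp A =>
    by_cases hA : A ∈ bound
    · simp [Arg.subst, hA]
    · simpa [Arg.subst, hA, Arg.assumptions, Arg.concl] using h
  | node c prems => rfl

theorem mem_assumptions_node_nil {A G : Formula} {Ds : List Arg} :
    G ∈ (Arg.node A (Ds.map fun D => ([], D))).assumptions ↔ ∃ D ∈ Ds, G ∈ D.assumptions := by
  rw [Arg.assumptions]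
  induction Ds with
  | nil => simp [assumptionsList]
  | cons D rest ih => simp [assumptionsList, ih]

theorem Arg.subst_node_nil (σ : Formula → Arg) (A : Formula) (Ds : List Arg) :
    (Arg.node A (Ds.map fun D => ([], D))).subst σ ∅ =
      .node A ((Ds.map (·.subst σ ∅)).map fun D => ([], D)) := by
  rw [Arg.subst]
  congr 1
  induction Ds with
  | nil => rfl
  | cons D rest ih => simp [substList, ih]

def ValidAssignment (X : Set ARule) (H : Set Red) (Γ : Finset Formula) (σ : Formula → Arg) :
    Prop :=
  ∀ G ∈ Γ, (σ G).assumptions = ∅ ∧ (σ G).concl = G ∧ CValid G X H (σ G)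

theorem Arg.assumptions_subst_eq_empty {X : Set ARule} {H : Set Red} {σ : Formula → Arg}
    {D : Arg} (hσ : ValidAssignment X H D.assumptions σ) : (D.subst σ ∅).assumptions = ∅ :=
  Finset.subset_empty.mp <| D.assumptions_subst_subset σ ∅ fun G hG _ => (hσ G hG).1

theorem valid_iff_forall_subst {B : Set ARule} {D : Arg} {J : Set Red} :
    Valid B D J ↔ ∀ H : Set Red, J ⊆ H → ∀ X : Set ARule, B ⊆ X → ∀ σ : Formula → Arg,
      ValidAssignment X H D.assumptions σ → CValid D.concl X H (D.subst σ ∅) := by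
  rw [Valid]
  split_ifs with hD
  · have hsubst (σ : Formula → Arg) : D.subst σ ∅ = D := D.subst_eq_self σ ∅ hD.subset
    refine ⟨fun hv H hJH X hBX σ _ => by rw [hsubst]; exact hv.mono hBX hJH, fun hv => ?_⟩
    simpa [hsubst] using hv J subset_rfl B subset_rfl Arg.hyp (by simp [ValidAssignment, hD])
  · exact ⟨fun hv H hJH X hBX σ => hv σ H X hJH hBX, fun hv σ H X hJH hBX => hv H hJH X hBX σ⟩

theorem valid_hyp (B : Set ARule) (G : Formula) (J : Set Red) : Valid B (.hyp G) J :=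
  valid_iff_forall_subst.mpr fun _ _ _ _ σ hσ => by
    simpa [Arg.subst, Arg.concl] using (hσ G (by simp [Arg.assumptions])).2.2

theorem forall₂_concl_and_iff {p : Arg → Prop} {Ds : List Arg} {As : List Formula} :
    Forall₂ (fun D G => D.concl = G ∧ p D) Ds As ↔ Ds.map Arg.concl = As ∧ ∀ D ∈ Ds, p D := by
  simp only [and_comm (a := Arg.concl _ = _)]
  rw [forall₂_and_left, ← forall₂_eq_eq_eq, forall₂_map_left_iff, and_comm]

noncomputable def pickByConcl (Ds : List Arg) (G : Formula) : Arg :=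
  open Classical in if h : ∃ D ∈ Ds, D.concl = G then h.choose else .hyp G

theorem pickByConcl_spec {Ds : List Arg} {G : Formula} (h : ∃ D ∈ Ds, D.concl = G) :
    pickByConcl Ds G ∈ Ds ∧ (pickByConcl Ds G).concl = G := by
  rw [pickByConcl, dif_pos h]
  exact h.choose_spec

/-- The uniform reduction `φ` of the paper. -/
noncomputable def replacementRed (D : Arg) : Red
  | .node _ prems => some (D.subst (pickByConcl (prems.map Prod.snd)) ∅)
  | .hyp _ => none

theorem replacementRed_node_nil (D : Arg) (A : Formula) (Ds : List Arg) :
    replacementRed D (.node A (Ds.map fun E => ([], E))) = some (D.subst (pickByConcl Ds) ∅) := by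
  simp [replacementRed, Function.comp_def]

section LogicallyValid

variable {D : Arg} {J : Set Red} {As : List Formula} {A : Formula}

theorem cValid_node_of_lValid (hD : D.assumptions = As.toFinset) (hc : D.concl = A)
    (hL : LValid D J) {H : Set Red} (hJH : J ⊆ H) (hφ : replacementRed D ∈ H)
    {X : Set ARule} (hX : IsBase X) {Ds : List Arg} (hconcl : Ds.map Arg.concl = As)
    (hDs : ∀ E ∈ Ds, E.assumptions = ∅ ∧ CValid E.concl X H E) :
    CValid A X H (.node A (Ds.map fun E => ([], E))) := by
  refine .of_reduces (.single (.red hφ (replacementRed_node_nil D A Ds))) ?_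
  have hσ : ValidAssignment X H D.assumptions (pickByConcl Ds) := by
    intro G hG
    rw [hD, List.mem_toFinset, ← hconcl] at hG
    obtain ⟨hmem, hG⟩ := pickByConcl_spec (List.mem_map.mp hG)
    obtain ⟨hcl, hv⟩ := hDs _ hmem
    exact ⟨hcl, hG, by rwa [hG] at hv⟩
  simpa [hc] using valid_iff_forall_subst.mp (hL X hX) H hJH X subset_rfl _ hσ

theorem ruleValidOn_of_lValid (hD : D.assumptions = As.toFinset) (hc : D.concl = A)
    (hL : LValid D J) {B : Set ARule} (hB : IsBase B) :
    RuleValidOn B (insert (replacementRed D) J) As A := by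
  intro H hJH X hBX Ds hDs
  obtain ⟨hconcl, hvalid⟩ := forall₂_concl_and_iff.mp hDs
  refine valid_iff_forall_subst.mpr fun H' hHH' X' hXX' σ hσ => ?_
  have hσE (E : Arg) (hE : E ∈ Ds) : ValidAssignment X' H' E.assumptions σ :=
    fun G hG => hσ G (mem_assumptions_node_nil.mpr ⟨E, hE, hG⟩)
  rw [Arg.subst_node_nil]
  refine cValid_node_of_lValid hD hc hL ((Set.subset_insert _ _).trans (hJH.trans hHH'))
    (hHH' (hJH (Set.mem_insert _ _))) (hB.trans (hBX.trans hXX')) ?_ ?_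
  · rw [List.map_map, ← hconcl]
    exact List.map_congr_left fun E hE => Arg.concl_subst fun G hG => (hσE E hE G hG).2.1
  · simp only [List.mem_map]
    rintro _ ⟨E, hE, rfl⟩
    refine ⟨E.assumptions_subst_eq_empty (hσE E hE), ?_⟩
    rw [Arg.concl_subst fun G hG => (hσE E hE G hG).2.1]
    exact valid_iff_forall_subst.mp (hvalid E hE) H' hHH' X' hXX' σ (hσE E hE)

end LogicallyValid

theorem assumptions_node_hyps (A : Formula) (As : List Formula) :
    (Arg.node A ((As.map Arg.hyp).map fun D => ([], D))).assumptions = As.toFinset := by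
  ext G
  rw [mem_assumptions_node_nil]
  simp [Arg.assumptions, eq_comm]

/-- with `Γ = {A₁,…,Aₙ}`, `Γ ⊨ A` in miP-tV iff the inference rule
from `A₁,…,Aₙ` to `A` (with no dischargement) is logically valid relative to some
set of reductions `J`. -/
theorem entails_iff_rule_logically_valid (As : List Formula) (A : Formula) :
    Entails As.toFinset A ↔
      ∃ J : Set Red, ∀ B : Set ARule, IsBase B → RuleValidOn B J As A := by
  constructor
  · rintro ⟨D, J, hD, hc, hL⟩
    exact ⟨insert (replacementRed D) J, fun B hB => ruleValidOn_of_lValid hD hc hL hB⟩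
  · rintro ⟨J, hrule⟩
    refine ⟨_, J, assumptions_node_hyps A As, rfl, fun B hB => ?_⟩
    refine hrule B hB J subset_rfl B subset_rfl _ (forall₂_concl_and_iff.mpr ⟨?_, ?_⟩)
    · simp [List.map_map, Function.comp_def, Arg.concl]
    · simp only [List.mem_map]
      rintro _ ⟨G, -, rfl⟩
      exact valid_hyp B G J
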